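/- arXiv:1907.00372 — 2 statements merged into one kernel-verified Lean document; each statement's English description precedes it below -/
import Mathlib

section
/- Let A be a super convex space and let J : Hom_SCvx(A, ℝ∞) → ℝ∞ be a map preserving countable convex combinations that is weakly averaging (J of the constant map with value u equals u) and satisfies J(g ∘ m) = g(J(m)) for all countably affine g : ℝ∞ → ℝ∞. Then J is monotone: if m₁, m₂ : A → ℝ∞ are countably affine maps with m₁(a) ≤ m₂(a) for all a ∈ A, then J(m₁) ≤ J(m₂). -/
/-!
Naturality of `J` with respect to the affine maps `x ↦ c x + b` (`c ≠ 0`) of `ℝ∞` lets `J` pass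
through countable combinations of rescaled copies of `m₁` and `m₂`. Let `σ = J m₂ < ∞`.

If `J m₁ = ∞`, combine `m₁, -2 m₁, m₂, -2 m₂, m₂, -2 m₂, …` with the weights `2⁻¹, 2⁻², …`:
consecutive terms cancel, so pointwise this gives `0` where `m₂` is finite and `∞` elsewhere
(using `m₁ ≤ m₂`), exactly as the same family built from `m₂` alone. Yet `J` sends the first
combination to `∞` and the second to `0`.

If `σ < ρ = J m₁ < ∞`, the family alternating `(m₂ - σ) / wᵢ` and `(ρ - m₁) / wᵢ` has all
`J`-values `0`, while pointwise each pair of weighted terms adds up to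
`(m₂ - m₁) + (ρ - σ) ≥ ρ - σ > 0`. The pointwise combination is therefore the constant `∞`,
whose `J`-value is `∞ ≠ 0`.
-/

open Filter

/-- `ℝ∞ = ℝ ∪ {∞}`, the one point extension of the real line. -/
abbrev Rinf : Type := WithTop ℝ

/-- A countable partition of one: a sequence in `[0,1]` summing to `1`. -/
def IsPartition (α : ℕ → ℝ) : Prop := (∀ i, α i ∈ Set.Icc (0 : ℝ) 1) ∧ HasSum α 1

open Classical in
/-- The countable convex combination `∑ α_i u_i` on `ℝ∞`: the limit of the partial sums
`∑_{i<N} α_i u_i` when every `u i` with nonzero coefficient is real and this limit exists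
in `ℝ`, and `∞` otherwise (terms with zero coefficient are ignored, i.e. `0·∞ = 0`). -/
noncomputable def scomb (α : ℕ → ℝ) (u : ℕ → Rinf) : Rinf :=
  if h : (∀ i, α i ≠ 0 → u i ≠ ⊤) ∧
      ∃ L : ℝ, Tendsto (fun N => ∑ i ∈ Finset.range N, α i * (u i).untopD 0) atTop (nhds L)
  then ((h.2.choose : ℝ) : Rinf) else ⊤

/-- A super convex space: a set with countable convex combinations satisfying the
projection and associativity axioms. -/
structure SuperConvexSpace (A : Type*) where
  comb : (ℕ → ℝ) → (ℕ → A) → A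
  proj : ∀ (j : ℕ) (u : ℕ → A), comb (fun i => if i = j then 1 else 0) u = u j
  assoc : ∀ (α : ℕ → ℝ) (β : ℕ → ℕ → ℝ) (u : ℕ → A), IsPartition α →
    (∀ i, IsPartition (β i)) →
    comb α (fun i => comb (β i) u) = comb (fun j => ∑' i, α i * β i j) u

/-- A map `m : A → ℝ∞` is countably affine if it preserves all countable convex
combinations. -/
def CountablyAffine {A : Type*} (S : SuperConvexSpace A) (m : A → Rinf) : Prop :=
  ∀ (α : ℕ → ℝ), IsPartition α → ∀ u : ℕ → A,
    m (S.comb α u) = scomb α (fun i => m (u i))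

/-- A countably affine endomap of `ℝ∞`. -/
def AffEndo (g : Rinf → Rinf) : Prop :=
  ∀ (α : ℕ → ℝ), IsPartition α → ∀ u : ℕ → Rinf, g (scomb α u) = scomb α (fun i => g (u i))

open Finset

def partialSum (α : ℕ → ℝ) (u : ℕ → Rinf) (N : ℕ) : ℝ :=
  ∑ i ∈ range N, α i * (u i).untopD 0

lemma scomb_ne_top_iff {α : ℕ → ℝ} {u : ℕ → Rinf} :
    scomb α u ≠ ⊤ ↔
      (∀ i, α i ≠ 0 → u i ≠ ⊤) ∧ ∃ L : ℝ, Tendsto (partialSum α u) atTop (nhds L) := by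
  unfold scomb partialSum
  split_ifs with h
  · exact iff_of_true WithTop.coe_ne_top h
  · exact iff_of_false (not_not.2 rfl) h

lemma scomb_eq_coe {α : ℕ → ℝ} {u : ℕ → Rinf} {L : ℝ} (hfin : ∀ i, α i ≠ 0 → u i ≠ ⊤)
    (hL : Tendsto (partialSum α u) atTop (nhds L)) : scomb α u = L := by
  have h : (∀ i, α i ≠ 0 → u i ≠ ⊤) ∧
      ∃ M : ℝ, Tendsto (fun N => ∑ i ∈ range N, α i * (u i).untopD 0) atTop (nhds M) :=
    ⟨hfin, L, hL⟩
  rw [scomb, dif_pos h, tendsto_nhds_unique h.2.choose_spec hL]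

lemma scomb_eq_top_of_eq_top {α : ℕ → ℝ} {u : ℕ → Rinf} {i : ℕ} (hα : α i ≠ 0)
    (hu : u i = ⊤) : scomb α u = ⊤ := by
  by_contra h
  exact (scomb_ne_top_iff.1 h).1 i hα hu

lemma partialSum_coe (α x : ℕ → ℝ) :
    partialSum α (fun i => (x i : Rinf)) = fun N => ∑ i ∈ range N, α i * x i :=
  rfl

lemma scomb_coe_eq_coe {α x : ℕ → ℝ} {L : ℝ}
    (hL : Tendsto (fun N => ∑ i ∈ range N, α i * x i) atTop (nhds L)) :
    scomb α (fun i => (x i : Rinf)) = L :=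
  scomb_eq_coe (fun _ _ => WithTop.coe_ne_top) (by simpa only [partialSum_coe] using hL)

lemma scomb_coe_eq_top {α x : ℕ → ℝ}
    (h : ∀ L : ℝ, ¬ Tendsto (fun N => ∑ i ∈ range N, α i * x i) atTop (nhds L)) :
    scomb α (fun i => (x i : Rinf)) = ⊤ := by
  by_contra hne
  obtain ⟨L, hL⟩ := (scomb_ne_top_iff.1 hne).2
  exact h L (by simpa only [partialSum_coe] using hL)

lemma scomb_zero (α : ℕ → ℝ) : scomb α (fun _ => 0) = 0 :=
  scomb_coe_eq_coe (x := fun _ => 0) (by simp)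

def affineExt (c b : ℝ) : Rinf → Rinf := WithTop.map (fun x => c * x + b)

@[simp]
lemma affineExt_coe (c b x : ℝ) : affineExt c b x = ((c * x + b : ℝ) : Rinf) := rfl

@[simp]
lemma affineExt_top (c b : ℝ) : affineExt c b ⊤ = ⊤ := rfl

@[simp]
lemma affineExt_eq_top_iff {c b : ℝ} {u : Rinf} : affineExt c b u = ⊤ ↔ u = ⊤ :=
  WithTop.map_eq_top_iff

lemma affineExt_inv_affineExt {c : ℝ} (hc : c ≠ 0) (b : ℝ) (u : Rinf) :
    affineExt c⁻¹ (-(b / c)) (affineExt c b u) = u := by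
  induction u using WithTop.recTopCoe with
  | top => rfl
  | coe x => simp only [affineExt_coe, WithTop.coe_inj]; field_simp; ring

lemma partialSum_affineExt {α : ℕ → ℝ} {u : ℕ → Rinf} (hfin : ∀ i, α i ≠ 0 → u i ≠ ⊤)
    (c b : ℝ) :
    partialSum α (fun i => affineExt c b (u i))
      = fun N => c * partialSum α u N + b * ∑ i ∈ range N, α i := by
  funext N
  simp only [partialSum, mul_sum, ← sum_add_distrib]
  refine sum_congr rfl fun i _ => ?_
  by_cases hα : α i = 0
  · simp [hα]
  · obtain ⟨x, hx⟩ := WithTop.ne_top_iff_exists.1 (hfin i hα)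
    simp only [← hx, affineExt_coe, WithTop.untopD_coe]
    ring

lemma scomb_affineExt_of_ne_top {α : ℕ → ℝ} (hα : IsPartition α) {u : ℕ → Rinf}
    (h : scomb α u ≠ ⊤) (c b : ℝ) :
    scomb α (fun i => affineExt c b (u i)) = affineExt c b (scomb α u) := by
  obtain ⟨hfin, L, hL⟩ := scomb_ne_top_iff.1 h
  have hfin' : ∀ i, α i ≠ 0 → affineExt c b (u i) ≠ ⊤ := fun i hi =>
    affineExt_eq_top_iff.not.2 (hfin i hi)
  rw [scomb_eq_coe hfin hL, affineExt_coe]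
  refine scomb_eq_coe hfin' ?_
  rw [partialSum_affineExt hfin]
  simpa using (hL.const_mul c).add (hα.2.tendsto_sum_nat.const_mul b)

lemma affEndo_affineExt {c : ℝ} (hc : c ≠ 0) (b : ℝ) : AffEndo (affineExt c b) := by
  intro α hα u
  by_cases h : scomb α u = ⊤
  · -- the image is `⊤` too, for otherwise the inverse affine map would make `scomb α u` finite
    rw [h, affineExt_top, eq_comm]
    by_contra h'
    have hu : scomb α u = affineExt c⁻¹ (-(b / c)) (scomb α fun i => affineExt c b (u i)) := by
      simpa only [affineExt_inv_affineExt hc] using scomb_affineExt_of_ne_top hα h' c⁻¹ (-(b / c))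
    exact h' (affineExt_eq_top_iff.1 (h ▸ hu).symm)
  · exact (scomb_affineExt_of_ne_top hα h c b).symm

lemma CountablyAffine.comp {A : Type*} {S : SuperConvexSpace A} {m : A → Rinf}
    (hm : CountablyAffine S m) {g : Rinf → Rinf} (hg : AffEndo g) :
    CountablyAffine S (fun a => g (m a)) := by
  intro α hα u
  simp only [hm α hα u]
  exact hg α hα _

noncomputable def geomWeight (i : ℕ) : ℝ := (1 / 2) ^ (i + 1)

lemma geomWeight_pos (i : ℕ) : 0 < geomWeight i := by
  unfold geomWeight
  positivity

lemma isPartition_geomWeight : IsPartition geomWeight := by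
  refine ⟨fun i => ⟨(geomWeight_pos i).le, pow_le_one₀ (by norm_num) (by norm_num)⟩, ?_⟩
  have h := hasSum_geometric_two.mul_left (1 / 2)
  rw [show (1 / 2 : ℝ) * 2 = 1 by norm_num] at h
  exact h.congr_fun fun i => by simp only [geomWeight, pow_succ']

lemma sum_range_two_mul {M : Type*} [AddCommMonoid M] (f : ℕ → M) (n : ℕ) :
    ∑ i ∈ range (2 * n), f i = ∑ j ∈ range n, (f (2 * j) + f (2 * j + 1)) := by
  induction n with
  | zero => simp
  | succ n ih =>
    rw [show 2 * (n + 1) = 2 * n + 1 + 1 by ring, sum_range_succ, sum_range_succ, ih,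
      sum_range_succ, add_assoc]

lemma not_tendsto_sum_of_le_pair_sum {x : ℕ → ℝ} {δ : ℝ} (hδ : 0 < δ)
    (h : ∀ j, δ ≤ x (2 * j) + x (2 * j + 1)) (L : ℝ) :
    ¬ Tendsto (fun N => ∑ i ∈ range N, x i) atTop (nhds L) := by
  intro hL
  have hpairs : Tendsto (fun n => ∑ i ∈ range (2 * n), x i) atTop atTop := by
    refine tendsto_atTop_mono (fun n => ?_) (tendsto_natCast_atTop_atTop.const_mul_atTop hδ)
    rw [sum_range_two_mul]
    calc δ * n = ∑ _j ∈ range n, δ := by simp [mul_comm]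
      _ ≤ _ := sum_le_sum fun j _ => h j
  have htwo : Tendsto (fun n : ℕ => 2 * n) atTop atTop :=
    tendsto_atTop_mono (fun n => Nat.le_mul_of_pos_left n two_pos) tendsto_id
  exact not_tendsto_nhds_of_tendsto_atTop hpairs L (hL.comp htwo)

lemma scomb_coe_eq_top_of_le_pair_sum {α x : ℕ → ℝ} {δ : ℝ} (hδ : 0 < δ)
    (h : ∀ j, δ ≤ α (2 * j) * x (2 * j) + α (2 * j + 1) * x (2 * j + 1)) :
    scomb α (fun i => (x i : Rinf)) = ⊤ :=
  scomb_coe_eq_top (not_tendsto_sum_of_le_pair_sum (x := fun i => α i * x i) hδ h)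

def cancelCoef (i : ℕ) : ℝ := if Even i then 1 else -2

lemma cancelCoef_ne_zero (i : ℕ) : cancelCoef i ≠ 0 := by
  unfold cancelCoef
  split_ifs <;> norm_num

/-- Each value `v j` is repeated at the positions `2j` and `2j + 1` with the coefficients `1`
and `-2`, so that with the weights `geomWeight` the two terms cancel. -/
def cancelling (v : ℕ → Rinf) (i : ℕ) : Rinf := affineExt (cancelCoef i) 0 (v (i / 2))

lemma scomb_cancelling_of_eq_top {v : ℕ → Rinf} {j : ℕ} (hv : v j = ⊤) :
    scomb geomWeight (cancelling v) = ⊤ :=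
  scomb_eq_top_of_eq_top (i := 2 * j) (geomWeight_pos _).ne' (by simp [cancelling, hv])

lemma scomb_cancelling_coe {r : ℕ → ℝ} {C : ℝ} (hr : ∀ j, |r j| ≤ C) :
    scomb geomWeight (cancelling fun j => (r j : Rinf)) = 0 := by
  have hC : 0 ≤ C := (abs_nonneg _).trans (hr 0)
  set x : ℕ → ℝ := fun i => geomWeight i * (cancelCoef i * r (i / 2))
  have heven : ∀ n, ∑ i ∈ range (2 * n), x i = 0 := fun n => by
    rw [sum_range_two_mul]
    refine sum_eq_zero fun j _ => ?_
    have hj : (2 * j + 1) / 2 = j := by omega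
    simp only [x, cancelCoef, geomWeight, hj, even_two_mul, Nat.not_even_two_mul_add_one,
      if_true, if_false, Nat.mul_div_cancel_left j two_pos]
    ring
  have hbound : ∀ N, ‖∑ i ∈ range N, x i‖ ≤ C * (1 / 2) ^ N := fun N => by
    obtain ⟨n, rfl | rfl⟩ := Nat.even_or_odd' N
    · simpa [heven] using by positivity
    · rw [sum_range_succ, heven, zero_add, Real.norm_eq_abs]
      simp only [x, cancelCoef, geomWeight, even_two_mul, if_true, one_mul,
        Nat.mul_div_cancel_left n two_pos, abs_mul, abs_pow]
      rw [mul_comm]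
      gcongr
      · exact hr n
      · norm_num
  have hgeom : Tendsto (fun N => C * (1 / 2 : ℝ) ^ N) atTop (nhds 0) := by
    simpa using (tendsto_pow_atTop_nhds_zero_of_lt_one (by norm_num : (0 : ℝ) ≤ 1 / 2)
      (by norm_num)).const_mul C
  have hx : cancelling (fun j => (r j : Rinf))
      = fun i => ((cancelCoef i * r (i / 2) : ℝ) : Rinf) := by
    funext i
    simp [cancelling]
  rw [hx, scomb_coe_eq_coe (squeeze_zero_norm hbound hgeom), WithTop.coe_zero]

lemma scomb_cancelling_eq_of_le {x y : Rinf} (hxy : x ≤ y) :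
    scomb geomWeight (cancelling fun j => if j = 0 then x else y)
      = scomb geomWeight (cancelling fun _ => y) := by
  induction y using WithTop.recTopCoe with
  | top =>
    rw [scomb_cancelling_of_eq_top (j := 1) (by simp), scomb_cancelling_of_eq_top (j := 0) rfl]
  | coe t =>
    obtain ⟨s, rfl⟩ := WithTop.ne_top_iff_exists.1 (ne_top_of_le_ne_top WithTop.coe_ne_top hxy)
    have hcoe : (fun j => if j = 0 then (s : Rinf) else t)
        = fun j => ((if j = 0 then s else t : ℝ) : Rinf) := by
      funext j
      split_ifs <;> rfl
    have hbound : ∀ j, |if j = 0 then s else t| ≤ |s| + |t| := fun j => by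
      split_ifs <;> linarith [abs_nonneg s, abs_nonneg t]
    rw [hcoe, scomb_cancelling_coe hbound, scomb_cancelling_coe (C := |t|) fun _ => le_rfl]

section GeneralizedElement

variable {A : Type*}

def PreservesScomb (S : SuperConvexSpace A) (J : (A → Rinf) → Rinf) : Prop :=
  ∀ (α : ℕ → ℝ), IsPartition α → ∀ m : ℕ → A → Rinf, (∀ i, CountablyAffine S (m i)) →
    J (fun a => scomb α (fun i => m i a)) = scomb α (fun i => J (m i))

def CommutesAffEndo (S : SuperConvexSpace A) (J : (A → Rinf) → Rinf) : Prop :=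
  ∀ g : Rinf → Rinf, AffEndo g → ∀ m : A → Rinf, CountablyAffine S m → J (g ∘ m) = g (J m)

variable {S : SuperConvexSpace A} {J : (A → Rinf) → Rinf}

namespace PreservesScomb

lemma map_scomb_affineExt (hJcomb : PreservesScomb S J) (hJnat : CommutesAffEndo S J)
    {α : ℕ → ℝ} (hα : IsPartition α) {c : ℕ → ℝ} (hc : ∀ i, c i ≠ 0) (b : ℕ → ℝ)
    {m : ℕ → A → Rinf} (hm : ∀ i, CountablyAffine S (m i)) :
    J (fun a => scomb α (fun i => affineExt (c i) (b i) (m i a)))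
      = scomb α (fun i => affineExt (c i) (b i) (J (m i))) := by
  have hg : ∀ i, AffEndo (affineExt (c i) (b i)) := fun i => affEndo_affineExt (hc i) (b i)
  rw [hJcomb α hα _ fun i => (hm i).comp (hg i)]
  congr 1
  funext i
  exact hJnat _ (hg i) _ (hm i)

lemma map_scomb_cancelling (hJcomb : PreservesScomb S J) (hJnat : CommutesAffEndo S J)
    {m : ℕ → A → Rinf} (hm : ∀ j, CountablyAffine S (m j)) :
    J (fun a => scomb geomWeight (cancelling fun j => m j a))
      = scomb geomWeight (cancelling fun j => J (m j)) :=
  hJcomb.map_scomb_affineExt hJnat isPartition_geomWeight cancelCoef_ne_zero (fun _ => 0)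
    fun i => hm (i / 2)

lemma apply_ne_top_of_le (hJcomb : PreservesScomb S J) (hJnat : CommutesAffEndo S J)
    {m₁ m₂ : A → Rinf} (h₁ : CountablyAffine S m₁) (h₂ : CountablyAffine S m₂) (hle : m₁ ≤ m₂)
    (hm₂ : J m₂ ≠ ⊤) : J m₁ ≠ ⊤ := by
  intro hm₁
  obtain ⟨σ, hσ⟩ := WithTop.ne_top_iff_exists.1 hm₂
  set m : ℕ → A → Rinf := fun j => if j = 0 then m₁ else m₂
  have hm : ∀ j, CountablyAffine S (m j) := fun j => by
    by_cases hj : j = 0 <;> simp only [m, hj, if_true, if_false, h₁, h₂]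
  have hpt : (fun a => scomb geomWeight (cancelling fun j => m j a))
      = fun a => scomb geomWeight (cancelling fun _ => m₂ a) := funext fun a => by
    simpa only [m, apply_ite (fun f : A → Rinf => f a)] using scomb_cancelling_eq_of_le (hle a)
  have key := congrArg J hpt
  rw [hJcomb.map_scomb_cancelling hJnat hm,
    hJcomb.map_scomb_cancelling hJnat (m := fun _ => m₂) fun _ => h₂,
    scomb_cancelling_of_eq_top (j := 0) (by simp [m, hm₁]), ← hσ,
    scomb_cancelling_coe (C := |σ|) fun _ => le_rfl] at key
  exact WithTop.top_ne_zero key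

lemma apply_le_apply_of_ne_top (hJcomb : PreservesScomb S J) (hJtop : J (fun _ => ⊤) = ⊤)
    (hJnat : CommutesAffEndo S J) {m₁ m₂ : A → Rinf} (h₁ : CountablyAffine S m₁)
    (h₂ : CountablyAffine S m₂) (hle : m₁ ≤ m₂) (hm₁ : J m₁ ≠ ⊤) (hm₂ : J m₂ ≠ ⊤) :
    J m₁ ≤ J m₂ := by
  obtain ⟨ρ, hρ⟩ := WithTop.ne_top_iff_exists.1 hm₁
  obtain ⟨σ, hσ⟩ := WithTop.ne_top_iff_exists.1 hm₂
  rw [← hρ, ← hσ, WithTop.coe_le_coe]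
  by_contra! hlt
  set m : ℕ → A → Rinf := fun i => if Even i then m₂ else m₁
  set μ : ℕ → ℝ := fun i => if Even i then σ else ρ
  set ε : ℕ → ℝ := fun i => if Even i then 1 else -1
  set c : ℕ → ℝ := fun i => ε i / geomWeight i
  set b : ℕ → ℝ := fun i => -(c i * μ i)
  have hc : ∀ i, c i ≠ 0 := fun i => div_ne_zero (by by_cases hi : Even i <;> simp [ε, hi])
    (geomWeight_pos i).ne'
  have hm : ∀ i, CountablyAffine S (m i) := fun i => by
    by_cases hi : Even i <;> simp only [m, hi, if_true, if_false, h₁, h₂]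
  have hJm : ∀ i, J (m i) = μ i := fun i => by
    by_cases hi : Even i <;> simp only [m, μ, hi, if_true, if_false, hρ, hσ]
  have hJ : J (fun a => scomb geomWeight (fun i => affineExt (c i) (b i) (m i a))) = 0 := by
    rw [hJcomb.map_scomb_affineExt hJnat isPartition_geomWeight hc b hm]
    simpa only [hJm, affineExt_coe, b, add_neg_cancel, WithTop.coe_zero] using scomb_zero _
  have hpt : ∀ a, scomb geomWeight (fun i => affineExt (c i) (b i) (m i a)) = ⊤ := by
    intro a
    by_cases ht : m₂ a = ⊤
    · exact scomb_eq_top_of_eq_top (i := 0) (geomWeight_pos 0).ne' (by simp [m, ht])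
    obtain ⟨t, ht⟩ := WithTop.ne_top_iff_exists.1 ht
    obtain ⟨s, hs⟩ :=
      WithTop.ne_top_iff_exists.1 (ne_top_of_le_ne_top (ht ▸ WithTop.coe_ne_top) (hle a))
    have hst : s ≤ t := WithTop.coe_le_coe.1 (hs ▸ ht ▸ hle a)
    have hval : (fun i => affineExt (c i) (b i) (m i a))
        = fun i => ((c i * (if Even i then t else s) + b i : ℝ) : Rinf) := by
      funext i
      by_cases hi : Even i <;> simp only [m, hi, if_true, if_false, ← hs, ← ht, affineExt_coe]
    rw [hval]
    refine scomb_coe_eq_top_of_le_pair_sum (sub_pos.2 hlt) fun j => ?_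
    have hw : ∀ i, geomWeight i ≠ 0 := fun i => (geomWeight_pos i).ne'
    simp only [c, b, ε, μ, even_two_mul, Nat.not_even_two_mul_add_one, if_true, if_false]
    field_simp
    rw [mul_div_cancel_left₀ _ (hw _), mul_div_cancel_left₀ _ (hw _)]
    linarith
  rw [funext hpt, hJtop] at hJ
  exact WithTop.top_ne_zero hJ

end PreservesScomb

end GeneralizedElement

/-- An `ℝ∞`-generalized element `J` of a super convex space `A` (countably affine,
weakly averaging, commuting with countably affine endomaps of `ℝ∞`) is monotone on
countably affine maps. -/
theorem stmt_3 {A : Type*} (S : SuperConvexSpace A) (J : (A → Rinf) → Rinf)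
    (hJcomb : ∀ (α : ℕ → ℝ), IsPartition α → ∀ m : ℕ → A → Rinf,
      (∀ i, CountablyAffine S (m i)) →
      J (fun a => scomb α (fun i => m i a)) = scomb α (fun i => J (m i)))
    (hJavg : ∀ u : Rinf, J (fun _ => u) = u)
    (hJnat : ∀ g : Rinf → Rinf, AffEndo g → ∀ m : A → Rinf, CountablyAffine S m →
      J (g ∘ m) = g (J m))
    (m₁ m₂ : A → Rinf) (h₁ : CountablyAffine S m₁) (h₂ : CountablyAffine S m₂)
    (hle : ∀ a, m₁ a ≤ m₂ a) :
    J m₁ ≤ J m₂ := by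
  by_cases hm₂ : J m₂ = ⊤
  · exact hm₂ ▸ le_top
  have hm₁ : J m₁ ≠ ⊤ := PreservesScomb.apply_ne_top_of_le hJcomb hJnat h₁ h₂ hle hm₂
  exact PreservesScomb.apply_le_apply_of_ne_top hJcomb (hJavg ⊤) hJnat h₁ h₂ hle hm₁ hm₂
end

section
/- Let A be a convex subset of ℝ closed under countable convex combinations and J : Hom(A, ℝ∞) → ℝ∞ a weakly averaging, order-preserving, countably affine functional on the countably affine maps A → ℝ∞ such that J(m) ∈ Image(m) for every m. Then there exists a unique a ∈ A such that J(m) = m(a) for every countably affine m : A → ℝ∞ (i.e., J = ev_a). -/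
/-!
The affine maps `x ↦ c x + d` are countably affine on `A`. Let `a ∈ A` be the point with
`J (x ↦ x) = a`, given by `J m ∈ Image m`. Mixing `x ↦ c x + d` with a map of opposite slope so
that the slopes cancel yields a constant, on which `J` is known; with `J m ∈ Image m` this forces
`J (x ↦ c x + d) = c a + d`.

A countably affine `m : A → ℝ∞` that is finite at two points is finite and affine on all of `A`,
since finiteness propagates along lines. One that is finite only at `e` is the countable
combination `∑ α_i (x ↦ (x - e) / α_i + m e)` for any partition `α` with nonzero weights, whose
partial sums diverge off `e`. In both cases countable affinity of `J` gives `J m = m a`, and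
`m ≡ ∞` is covered by `J m ∈ Image m`. Uniqueness holds because `x ↦ x` separates points.
-/

open Filter

lemma scomb_eq_coe_of_hasSum {α : ℕ → ℝ} {u : ℕ → Rinf} (hu : ∀ i, α i ≠ 0 → u i ≠ ⊤) {L : ℝ}
    (hL : HasSum (fun i => α i * (u i).untopD 0) L) : scomb α u = L := by
  classical
  have h : (∀ i, α i ≠ 0 → u i ≠ ⊤) ∧
      ∃ L : ℝ, Tendsto (fun N => ∑ i ∈ Finset.range N, α i * (u i).untopD 0) atTop (nhds L) :=
    ⟨hu, L, hL.tendsto_sum_nat⟩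
  rw [scomb, dif_pos h]
  exact congrArg _ (tendsto_nhds_unique h.2.choose_spec hL.tendsto_sum_nat)

lemma scomb_eq_top_of_exists {α : ℕ → ℝ} {u : ℕ → Rinf} (h : ∃ i, α i ≠ 0 ∧ u i = ⊤) :
    scomb α u = ⊤ := by
  obtain ⟨i, hi, hui⟩ := h
  rw [scomb, dif_neg]
  exact fun h => h.1 i hi hui

noncomputable def twoPoint (t : ℝ) : ℕ → ℝ :=
  fun i => if i = 0 then t else if i = 1 then 1 - t else 0

lemma hasSum_twoPoint_mul (t : ℝ) (v : ℕ → ℝ) :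
    HasSum (fun i => twoPoint t i * v i) (t * v 0 + (1 - t) * v 1) := by
  convert (hasSum_ite_eq 0 (t * v 0)).add (hasSum_ite_eq 1 ((1 - t) * v 1)) using 1
  funext i
  rcases i with _ | _ | i <;> simp [twoPoint]

lemma isPartition_twoPoint {t : ℝ} (h0 : 0 ≤ t) (h1 : t ≤ 1) : IsPartition (twoPoint t) := by
  refine ⟨fun i => ?_, by simpa using hasSum_twoPoint_mul t fun _ => 1⟩
  rcases i with _ | _ | i <;> simp [twoPoint, h0, h1]

lemma scomb_twoPoint (t x y : ℝ) :
    scomb (twoPoint t) (fun i => if i = 0 then (x : Rinf) else y)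
      = ((t * x + (1 - t) * y : ℝ) : Rinf) := by
  refine scomb_eq_coe_of_hasSum (fun i _ => by split_ifs <;> simp) ?_
  convert hasSum_twoPoint_mul t (fun i => if i = 0 then x else y) using 1
  · funext i
    split_ifs <;> simp
  · simp

lemma scomb_twoPoint_top {t : ℝ} (ht : t ≠ 0) (w : Rinf) :
    scomb (twoPoint t) (fun i => if i = 0 then ⊤ else w) = ⊤ :=
  scomb_eq_top_of_exists ⟨0, by simpa [twoPoint] using ht, rfl⟩

lemma scomb_inv_mul_add {α : ℕ → ℝ} (hα : IsPartition α) (hne : ∀ i, α i ≠ 0) (x e f : ℝ) :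
    scomb α (fun i => (((α i)⁻¹ * x + (f - (α i)⁻¹ * e) : ℝ) : Rinf))
      = if x = e then (f : Rinf) else ⊤ := by
  have hterm : ∀ i, α i * ((α i)⁻¹ * x + (f - (α i)⁻¹ * e)) = (x - e) + α i * f := fun i => by
    field_simp [hne i]
    ring
  split_ifs with hxe
  · refine scomb_eq_coe_of_hasSum (fun _ _ => WithTop.coe_ne_top) ?_
    simpa [hterm, hxe] using hα.2.mul_right f
  · rw [scomb, dif_neg]
    -- convergent partial sums would have increments `(x - e) + α N * f → 0`, but `α N → 0`
    rintro ⟨-, L, hL⟩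
    have hzero := (hL.comp (tendsto_add_atTop_nat 1)).sub hL
    have hlim : Tendsto (fun N => (x - e) + α N * f) atTop (nhds (x - e)) := by
      simpa using (hα.2.summable.tendsto_atTop_zero.mul_const f).const_add (x - e)
    simp only [Function.comp_def, Finset.sum_range_succ, add_sub_cancel_left, sub_self,
      WithTop.untopD_coe, hterm] at hzero
    exact hxe (sub_eq_zero.mp (tendsto_nhds_unique hlim hzero))

lemma exists_isPartition_forall_ne_zero : ∃ α : ℕ → ℝ, IsPartition α ∧ ∀ i, α i ≠ 0 := by
  refine ⟨fun i => 1 / 2 / 2 ^ i, ⟨fun i => ⟨by positivity, ?_⟩, hasSum_geometric_two' 1⟩,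
    fun i => by positivity⟩
  dsimp only
  rw [div_div, div_le_one (by positivity)]
  linarith [one_le_pow₀ (n := i) (by norm_num : (1 : ℝ) ≤ 2)]

def CombEqTsum {A : Set ℝ} (S : SuperConvexSpace A) : Prop :=
  ∀ (α : ℕ → ℝ), IsPartition α → ∀ u : ℕ → A, ((S.comb α u : ℝ)) = ∑' i, α i * (u i : ℝ)

def affineFn (A : Set ℝ) (c d : ℝ) : A → Rinf := fun x => ((c * x + d : ℝ) : Rinf)

lemma affineFn_apply {A : Set ℝ} (c d : ℝ) (x : A) :
    affineFn A c d x = ((c * x + d : ℝ) : Rinf) := rfl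

lemma affineFn_zero (A : Set ℝ) (d : ℝ) : affineFn A 0 d = fun _ => (d : Rinf) := by
  funext x
  rw [affineFn_apply, zero_mul, zero_add]

section Subspace

variable {A : Set ℝ} {S : SuperConvexSpace A}

lemma countablyAffine_affineFn (hS : CombEqTsum S)
    (hsum : ∀ α, IsPartition α → ∀ u : ℕ → A, Summable fun i => α i * (u i : ℝ)) (c d : ℝ) :
    CountablyAffine S (affineFn A c d) := by
  intro α hα u
  have hsum' := ((hsum α hα u).hasSum.mul_left c).add (hα.2.mul_right d)
  rw [one_mul] at hsum'
  rw [affineFn_apply, hS α hα u]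
  refine (scomb_eq_coe_of_hasSum (fun _ _ => WithTop.coe_ne_top) ?_).symm
  simpa only [WithTop.untopD_coe, mul_add, mul_left_comm c, mul_comm d] using hsum'

lemma comb_twoPoint (hS : CombEqTsum S) {t : ℝ} (h0 : 0 ≤ t) (h1 : t ≤ 1) {x y z : A}
    (hz : (z : ℝ) = t * x + (1 - t) * y) :
    z = S.comb (twoPoint t) (fun i => if i = 0 then x else y) :=
  Subtype.ext <| by
    rw [hS _ (isPartition_twoPoint h0 h1), (hasSum_twoPoint_mul t _).tsum_eq]
    simpa using hz

namespace CountablyAffine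

variable {m : A → Rinf}

lemma apply_eq_scomb_twoPoint (hm : CountablyAffine S m) (hS : CombEqTsum S) {t : ℝ}
    (h0 : 0 ≤ t) (h1 : t ≤ 1) {x y z : A} (hz : (z : ℝ) = t * x + (1 - t) * y) :
    m z = scomb (twoPoint t) (fun i => if i = 0 then m x else m y) := by
  rw [comb_twoPoint hS h0 h1 hz, hm _ (isPartition_twoPoint h0 h1)]
  simp only [apply_ite]

lemma map_segment (hm : CountablyAffine S m) (hS : CombEqTsum S) {t : ℝ}
    (h0 : 0 ≤ t) (h1 : t ≤ 1) {x y z : A} (hz : (z : ℝ) = t * x + (1 - t) * y) {fx fy : ℝ}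
    (hx : m x = fx) (hy : m y = fy) : m z = ((t * fx + (1 - t) * fy : ℝ) : Rinf) := by
  rw [hm.apply_eq_scomb_twoPoint hS h0 h1 hz, hx, hy, scomb_twoPoint]

/-- Here `x` lies on the segment from `z` to `y`, so `m z = ∞` would force `m x = ∞`. -/
lemma map_line_of_one_lt (hm : CountablyAffine S m) (hS : CombEqTsum S) {t : ℝ} (ht : 1 < t)
    {x y z : A} (hz : (z : ℝ) = t * x + (1 - t) * y) {fx fy : ℝ}
    (hx : m x = fx) (hy : m y = fy) : m z = ((t * fx + (1 - t) * fy : ℝ) : Rinf) := by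
  have ht0 : t ≠ 0 := by positivity
  have hs0 : 0 ≤ t⁻¹ := by positivity
  have hs1 : t⁻¹ ≤ 1 := inv_le_one_of_one_le₀ ht.le
  have hxz : (x : ℝ) = t⁻¹ * z + (1 - t⁻¹) * y := by
    rw [hz]
    field_simp
    ring
  have hz_ne : m z ≠ ⊤ := fun hztop => by
    have := hm.apply_eq_scomb_twoPoint hS hs0 hs1 hxz
    rw [hztop, scomb_twoPoint_top (inv_ne_zero ht0), hx] at this
    exact WithTop.coe_ne_top this
  obtain ⟨fz, hfz⟩ := WithTop.ne_top_iff_exists.mp hz_ne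
  have hfx := hm.map_segment hS hs0 hs1 hxz hfz.symm hy
  rw [hx, WithTop.coe_inj] at hfx
  rw [← hfz, WithTop.coe_inj, hfx]
  field_simp
  ring

lemma map_line (hm : CountablyAffine S m) (hS : CombEqTsum S) {t : ℝ}
    {x y z : A} (hz : (z : ℝ) = t * x + (1 - t) * y) {fx fy : ℝ}
    (hx : m x = fx) (hy : m y = fy) : m z = ((t * fx + (1 - t) * fy : ℝ) : Rinf) := by
  rcases lt_or_ge 1 t with ht1 | ht1
  · exact hm.map_line_of_one_lt hS ht1 hz hx hy
  rcases le_or_gt 0 t with ht0 | ht0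
  · exact hm.map_segment hS ht0 ht1 hz hx hy
  have hz' : (z : ℝ) = (1 - t) * y + (1 - (1 - t)) * x := by rw [hz]; ring
  rw [hm.map_line_of_one_lt hS (by linarith) hz' hy hx]
  congr 1
  ring

lemma eq_affineFn_of_ne_top (hm : CountablyAffine S m) (hS : CombEqTsum S) {p q : A}
    (hpq : p ≠ q) (hp : m p ≠ ⊤) (hq : m q ≠ ⊤) : ∃ c d, m = affineFn A c d := by
  obtain ⟨fp, hfp⟩ := WithTop.ne_top_iff_exists.mp hp
  obtain ⟨fq, hfq⟩ := WithTop.ne_top_iff_exists.mp hq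
  have hqp : (q : ℝ) - p ≠ 0 := sub_ne_zero.mpr fun h => hpq (Subtype.ext h.symm)
  refine ⟨(fq - fp) / (q - p), fp - (fq - fp) / (q - p) * p, funext fun x => ?_⟩
  have hx : (x : ℝ) = ((x - p) / (q - p)) * q + (1 - (x - p) / (q - p)) * p := by
    field_simp
    ring
  rw [hm.map_line hS hx hfq.symm hfp.symm, affineFn_apply, WithTop.coe_inj]
  field_simp
  ring

end CountablyAffine

end Subspace

section Functional

variable {A : Set ℝ} {S : SuperConvexSpace A} {J : (A → Rinf) → Rinf}

lemma functional_affineFn_twoPoint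
    (hJcomb : ∀ (α : ℕ → ℝ), IsPartition α → ∀ m : ℕ → A → Rinf,
      (∀ i, CountablyAffine S (m i)) →
      J (fun a => scomb α (fun i => m i a)) = scomb α (fun i => J (m i)))
    (hca : ∀ c d, CountablyAffine S (affineFn A c d)) {t : ℝ} (h0 : 0 ≤ t) (h1 : t ≤ 1)
    (c d c' d' : ℝ) :
    J (affineFn A (t * c + (1 - t) * c') (t * d + (1 - t) * d'))
      = scomb (twoPoint t)
          (fun i => if i = 0 then J (affineFn A c d) else J (affineFn A c' d')) := by
  have h := hJcomb _ (isPartition_twoPoint h0 h1)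
    (fun i => if i = 0 then affineFn A c d else affineFn A c' d')
    (fun i => by split_ifs <;> exact hca _ _)
  simp only [apply_ite, ite_apply] at h
  rw [← h]
  congr 1
  funext x
  rw [affineFn_apply, affineFn_apply, affineFn_apply, scomb_twoPoint]
  congr 1
  ring

lemma functional_affineFn_of_mul_neg (hJavg : ∀ w : Rinf, J (fun _ => w) = w)
    (hJcomb : ∀ (α : ℕ → ℝ), IsPartition α → ∀ m : ℕ → A → Rinf,
      (∀ i, CountablyAffine S (m i)) →
      J (fun a => scomb α (fun i => m i a)) = scomb α (fun i => J (m i)))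
    (hJim : ∀ m : A → Rinf, CountablyAffine S m → J m ∈ Set.range m)
    (hca : ∀ c d, CountablyAffine S (affineFn A c d)) {a : A} {s : ℝ}
    (hs : J (affineFn A s 0) = ((s * a : ℝ) : Rinf)) {c : ℝ} (hcs : c * s < 0) (d : ℝ) :
    J (affineFn A c d) = affineFn A c d a := by
  obtain ⟨b, hb⟩ := hJim _ (hca c d)
  have hden : 0 < s ^ 2 - c * s := by nlinarith [sq_nonneg s]
  set t := s ^ 2 / (s ^ 2 - c * s) with ht
  have ht0 : 0 ≤ t := by positivity
  have ht1 : t ≤ 1 := div_le_one_of_le₀ (by linarith) hden.le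
  have hs0 : s ≠ 0 := by rintro rfl; simp at hcs
  have hc0 : c ≠ 0 := by rintro rfl; simp at hcs
  have hsc : s - c ≠ 0 := fun h => hden.ne' (by linear_combination s * h)
  have htc : t * c ≠ 0 := by positivity
  have hslope : t * c + (1 - t) * s = 0 := by
    rw [ht]
    field_simp
    ring
  have key := functional_affineFn_twoPoint hJcomb hca ht0 ht1 c d s 0
  rw [hslope, mul_zero, add_zero, affineFn_zero, hJavg, ← hb, hs, affineFn_apply,
    scomb_twoPoint, WithTop.coe_inj] at key
  have hba : (b : ℝ) = a := by
    have : t * c * (b - a) = 0 := by linear_combination -key - (a : ℝ) * hslope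
    linarith [(mul_eq_zero.mp this).resolve_left htc]
  rw [← hb, affineFn_apply, affineFn_apply, hba]

lemma functional_affineFn (hJavg : ∀ w : Rinf, J (fun _ => w) = w)
    (hJcomb : ∀ (α : ℕ → ℝ), IsPartition α → ∀ m : ℕ → A → Rinf,
      (∀ i, CountablyAffine S (m i)) →
      J (fun a => scomb α (fun i => m i a)) = scomb α (fun i => J (m i)))
    (hJim : ∀ m : A → Rinf, CountablyAffine S m → J m ∈ Set.range m)
    (hca : ∀ c d, CountablyAffine S (affineFn A c d)) {a : A}
    (ha : J (affineFn A 1 0) = ((a : ℝ) : Rinf)) (c d : ℝ) :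
    J (affineFn A c d) = affineFn A c d a := by
  have hneg : ∀ c < 0, ∀ d, J (affineFn A c d) = affineFn A c d a := fun c hc =>
    functional_affineFn_of_mul_neg hJavg hJcomb hJim hca (s := 1) (by rwa [one_mul])
      (by rwa [mul_one])
  rcases lt_trichotomy c 0 with hc | rfl | hc
  · exact hneg c hc d
  · rw [affineFn_zero, hJavg]
  · have hs : J (affineFn A (-1) 0) = ((-1 * a : ℝ) : Rinf) := by
      rw [hneg (-1) (by norm_num), affineFn_apply, add_zero]
    exact functional_affineFn_of_mul_neg hJavg hJcomb hJim hca hs (by linarith) d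

lemma functional_eq_eval (hS : CombEqTsum S)
    (hJcomb : ∀ (α : ℕ → ℝ), IsPartition α → ∀ m : ℕ → A → Rinf,
      (∀ i, CountablyAffine S (m i)) →
      J (fun a => scomb α (fun i => m i a)) = scomb α (fun i => J (m i)))
    (hJim : ∀ m : A → Rinf, CountablyAffine S m → J m ∈ Set.range m)
    (hca : ∀ c d, CountablyAffine S (affineFn A c d)) {a : A}
    (hJa : ∀ c d, J (affineFn A c d) = affineFn A c d a) {m : A → Rinf}
    (hm : CountablyAffine S m) : J m = m a := by
  by_cases htwo : ∃ p q, p ≠ q ∧ m p ≠ ⊤ ∧ m q ≠ ⊤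
  · obtain ⟨p, q, hpq, hp, hq⟩ := htwo
    obtain ⟨c, d, rfl⟩ := hm.eq_affineFn_of_ne_top hS hpq hp hq
    exact hJa c d
  push Not at htwo
  by_cases hone : ∃ e, m e ≠ ⊤
  · obtain ⟨e, he⟩ := hone
    obtain ⟨fe, hfe⟩ := WithTop.ne_top_iff_exists.mp he
    obtain ⟨α, hα, hne⟩ := exists_isPartition_forall_ne_zero
    set k : ℕ → A → Rinf := fun i => affineFn A (α i)⁻¹ (fe - (α i)⁻¹ * e)
    have hk : m = fun x => scomb α (fun i => k i x) := funext fun x => by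
      simp only [k, affineFn_apply]
      rw [scomb_inv_mul_add hα hne]
      split_ifs with hx
      · rw [Subtype.ext hx, hfe]
      · exact htwo e x (fun h => hx (by rw [h])) he
    rw [hk, hJcomb α hα k (fun i => hca _ _)]
    exact congrArg _ (funext fun i => hJa _ _)
  · push Not at hone
    obtain ⟨b, hb⟩ := hJim m hm
    rw [← hb, hone, hone]

end Functional

theorem stmt_15_general (A : Set ℝ)
    (hclosed : ∀ (α : ℕ → ℝ), IsPartition α → ∀ u : ℕ → ℝ, (∀ i, u i ∈ A) →
      Summable (fun i => α i * u i) ∧ (∑' i, α i * u i) ∈ A)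
    (S : SuperConvexSpace ↥A)
    (hS : ∀ (α : ℕ → ℝ), IsPartition α → ∀ u : ℕ → ↥A,
      ((S.comb α u : ℝ)) = ∑' i, α i * (u i : ℝ))
    (J : (↥A → Rinf) → Rinf)
    (hJavg : ∀ w : Rinf, J (fun _ => w) = w)
    (hJcomb : ∀ (α : ℕ → ℝ), IsPartition α → ∀ m : ℕ → ↥A → Rinf,
      (∀ i, CountablyAffine S (m i)) →
      J (fun a => scomb α (fun i => m i a)) = scomb α (fun i => J (m i)))
    (hJim : ∀ m : ↥A → Rinf, CountablyAffine S m → J m ∈ Set.range m) :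
    ∃! a : ↥A, ∀ m : ↥A → Rinf, CountablyAffine S m → J m = m a := by
  have hca : ∀ c d, CountablyAffine S (affineFn A c d) :=
    countablyAffine_affineFn hS fun α hα u => (hclosed α hα _ fun i => (u i).2).1
  obtain ⟨a, ha⟩ := hJim _ (hca 1 0)
  have hJa := functional_affineFn hJavg hJcomb hJim hca (a := a)
    (by rw [← ha, affineFn_apply, one_mul, add_zero])
  refine ⟨a, fun m hm => functional_eq_eval hS hJcomb hJim hca hJa hm, fun y hy => ?_⟩
  have hya := (hy _ (hca 1 0)).symm.trans (hJa 1 0)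
  simp only [affineFn_apply, WithTop.coe_inj, one_mul, add_zero] at hya
  exact Subtype.ext hya

/-- Codensity (fullness of the truncated Yoneda embedding) for super convex subspaces of
`ℝ`: every weakly averaging, order-preserving, countably affine functional `J` on the
countably affine maps `A → ℝ∞` with `J(m) ∈ Image(m)` for every `m` is evaluation at a
unique point of `A`. -/
theorem stmt_15 (A : Set ℝ) (hconv : Convex ℝ A)
    (hclosed : ∀ (α : ℕ → ℝ), IsPartition α → ∀ u : ℕ → ℝ, (∀ i, u i ∈ A) →
      Summable (fun i => α i * u i) ∧ (∑' i, α i * u i) ∈ A)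
    (S : SuperConvexSpace ↥A)
    (hS : ∀ (α : ℕ → ℝ), IsPartition α → ∀ u : ℕ → ↥A,
      ((S.comb α u : ℝ)) = ∑' i, α i * (u i : ℝ))
    (J : (↥A → Rinf) → Rinf)
    (hJavg : ∀ w : Rinf, J (fun _ => w) = w)
    (hJmono : ∀ m₁ m₂ : ↥A → Rinf, CountablyAffine S m₁ → CountablyAffine S m₂ →
      (∀ a, m₁ a ≤ m₂ a) → J m₁ ≤ J m₂)
    (hJcomb : ∀ (α : ℕ → ℝ), IsPartition α → ∀ m : ℕ → ↥A → Rinf,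
      (∀ i, CountablyAffine S (m i)) →
      J (fun a => scomb α (fun i => m i a)) = scomb α (fun i => J (m i)))
    (hJim : ∀ m : ↥A → Rinf, CountablyAffine S m → J m ∈ Set.range m) :
    ∃! a : ↥A, ∀ m : ↥A → Rinf, CountablyAffine S m → J m = m a :=
  stmt_15_general A hclosed S hS J hJavg hJcomb hJim
end
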